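/- arXiv:1709.08556 — 6 statements merged into one kernel-verified Lean document; each statement's English description precedes it below -/
import Mathlib

section
/- Let r, z, R be positive reals satisfying R/r = cosh(z/r), R/z = sinh(z/r), and R² + z² = 1. Then r = z·R and 1/R = coth(1/R). -/
/-! The identity `cosh² - sinh² = 1` turns the first two equations into `R²/r² - R²/z² = 1`;
together with `R² + z² = 1` this gives `R²/r² = 1/z²`, i.e. `r = z R`. Then `z / r = 1 / R`, and
dividing the first equation by the second shows that `coth (z / r) = z / r`. -/

lemma sq_eq_mul_sq_of_div_sq_sub_div_sq_eq_one {r z R : ℝ} (hr : r ≠ 0) (hz : z ≠ 0)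
    (h : (R / r) ^ 2 - (R / z) ^ 2 = 1) (hsphere : R ^ 2 + z ^ 2 = 1) :
    r ^ 2 = (z * R) ^ 2 := by
  field_simp at h
  linear_combination (-r ^ 2) * hsphere - h

lemma cosh_div_sinh_eq_div_of_div_eq {t a r z : ℝ} (ha : a ≠ 0)
    (hcosh : a / r = Real.cosh t) (hsinh : a / z = Real.sinh t) :
    Real.cosh t / Real.sinh t = z / r := by
  rw [← hcosh, ← hsinh, div_div_div_cancel_left' _ _ ha]

/-- If positive reals `r, z, R` satisfy `R/r = cosh(z/r)`, `R/z = sinh(z/r)` and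
`R² + z² = 1`, then `r = z·R` and `1/R = coth(1/R)`. -/
theorem stmt_1 (r z R : ℝ) (hr : 0 < r) (hz : 0 < z) (hR : 0 < R)
    (h1 : R / r = Real.cosh (z / r)) (h2 : R / z = Real.sinh (z / r))
    (h3 : R ^ 2 + z ^ 2 = 1) :
    r = z * R ∧ 1 / R = Real.cosh (1 / R) / Real.sinh (1 / R) := by
  have hyperbolic : (R / r) ^ 2 - (R / z) ^ 2 = 1 := by
    rw [h1, h2]
    exact Real.cosh_sq_sub_sinh_sq _
  have hrzR : r = z * R := (pow_left_inj₀ hr.le (by positivity) two_ne_zero).1 <|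
    sq_eq_mul_sq_of_div_sq_sub_div_sq_eq_one hr.ne' hz.ne' hyperbolic h3
  have hzr : z / r = 1 / R := by
    rw [hrzR]
    field_simp
  refine ⟨hrzR, ?_⟩
  rw [← hzr]
  exact (cosh_div_sinh_eq_div_of_div_eq hR.ne' h1 h2).symm
end

section
/- For every h ∈ (0,1), setting r̃ = h·√(1−h²) and z̃ = h − r̃·arcsinh(√(1−h²)/h), the function h ↦ z̃/r̃ is differentiable with derivative (d/dh)(z̃/r̃) = 1/(h·(1−h²)^{3/2}), which is strictly positive. -/
/-!
Dividing through by `r̃ = h√(1-h²)` gives `z̃/r̃ = 1/√(1-h²) - arsinh(√(1-h²)/h)` on `(0,1)`.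
With `s = √(1-h²)`, the two terms have derivatives `h/s³` and `1/(hs)`, whose sum is
`(h² + s²)/(hs³) = 1/(hs³)`, and `s³ = (1-h²)^{3/2}`.
-/

open Real Set

lemma rpow_three_halves {a : ℝ} (ha : 0 ≤ a) : a ^ ((3 : ℝ) / 2) = √a ^ 3 := by
  rw [show (3 : ℝ) / 2 = 1 / 2 * 3 by norm_num, rpow_mul ha, ← sqrt_eq_rpow]
  norm_cast

lemma hasDerivAt_sqrt_one_sub_sq {x : ℝ} (hx : x ^ 2 < 1) :
    HasDerivAt (fun y => √(1 - y ^ 2)) (-x / √(1 - x ^ 2)) x := by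
  have hinner : HasDerivAt (fun y : ℝ => 1 - y ^ 2) (-(2 * x)) x := by
    simpa using (hasDerivAt_pow 2 x).const_sub 1
  refine ((hasDerivAt_sqrt (by linarith)).comp x hinner).congr_deriv ?_
  field_simp

lemma hasDerivAt_inv_sqrt_one_sub_sq {x : ℝ} (hx : x ^ 2 < 1) :
    HasDerivAt (fun y => (√(1 - y ^ 2))⁻¹) (x / √(1 - x ^ 2) ^ 3) x := by
  have hs : 0 < √(1 - x ^ 2) := sqrt_pos.mpr (by linarith)
  refine ((hasDerivAt_sqrt_one_sub_sq hx).inv hs.ne').congr_deriv ?_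
  field_simp

lemma hasDerivAt_arsinh_sqrt_one_sub_sq_div {x : ℝ} (hx : x ∈ Ioo 0 1) :
    HasDerivAt (fun y => arsinh (√(1 - y ^ 2) / y)) (-1 / (x * √(1 - x ^ 2))) x := by
  obtain ⟨hx0, hx1⟩ := hx
  have hx2 : 0 < 1 - x ^ 2 := by nlinarith
  have hs : 0 < √(1 - x ^ 2) := sqrt_pos.mpr hx2
  have hquot : HasDerivAt (fun y => √(1 - y ^ 2) / y) (-1 / (√(1 - x ^ 2) * x ^ 2)) x := by
    refine ((hasDerivAt_sqrt_one_sub_sq (by nlinarith)).div (hasDerivAt_id x)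
      hx0.ne').congr_deriv ?_
    simp only [id]
    field_simp
    rw [sq_sqrt hx2.le]
    ring
  have hcosh : √(1 + (√(1 - x ^ 2) / x) ^ 2) = 1 / x := by
    rw [← sqrt_sq (one_div_pos.mpr hx0).le]
    congr 1
    field_simp
    rw [sq_sqrt hx2.le]
    ring
  refine hquot.arsinh.congr_deriv ?_
  rw [hcosh, smul_eq_mul]
  field_simp

lemma hasDerivAt_inv_sqrt_one_sub_sq_sub_arsinh {x : ℝ} (hx : x ∈ Ioo 0 1) :
    HasDerivAt (fun y => (√(1 - y ^ 2))⁻¹ - arsinh (√(1 - y ^ 2) / y))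
      (1 / (x * √(1 - x ^ 2) ^ 3)) x := by
  have hx2 : 0 < 1 - x ^ 2 := by nlinarith [hx.1, hx.2]
  have hs : 0 < √(1 - x ^ 2) := sqrt_pos.mpr hx2
  refine ((hasDerivAt_inv_sqrt_one_sub_sq (by linarith)).sub
    (hasDerivAt_arsinh_sqrt_one_sub_sq_div hx)).congr_deriv ?_
  have hx0 := hx.1.ne'
  field_simp
  nlinarith [sq_sqrt hx2.le]

lemma eqOn_div_eq_inv_sqrt_one_sub_sq_sub_arsinh :
    EqOn (fun h : ℝ => (h - h * √(1 - h ^ 2) * arsinh (√(1 - h ^ 2) / h)) / (h * √(1 - h ^ 2)))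
      (fun h => (√(1 - h ^ 2))⁻¹ - arsinh (√(1 - h ^ 2) / h)) (Ioo 0 1) := by
  rintro x ⟨hx0, hx1⟩
  have hs : 0 < √(1 - x ^ 2) := sqrt_pos.mpr (by nlinarith)
  field_simp

/-- For `h ∈ (0,1)`, with `r̃ = h√(1−h²)` and `z̃ = h − r̃·arcsinh(√(1−h²)/h)`,
the function `h ↦ z̃/r̃` has derivative `1/(h(1−h²)^{3/2})`, which is positive. -/
theorem stmt_2 (h : ℝ) (hh : h ∈ Set.Ioo (0 : ℝ) 1) :
    HasDerivAt
      (fun h : ℝ =>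
        (h - h * Real.sqrt (1 - h ^ 2) * Real.arsinh (Real.sqrt (1 - h ^ 2) / h)) /
          (h * Real.sqrt (1 - h ^ 2)))
      (1 / (h * (1 - h ^ 2) ^ ((3 : ℝ) / 2))) h ∧
    0 < 1 / (h * (1 - h ^ 2) ^ ((3 : ℝ) / 2)) := by
  have hh2 : 0 < 1 - h ^ 2 := by nlinarith [hh.1, hh.2]
  rw [rpow_three_halves hh2.le]
  refine ⟨?_, by have := hh.1; positivity⟩
  exact (hasDerivAt_inv_sqrt_one_sub_sq_sub_arsinh hh).congr_of_eventuallyEq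
    (eqOn_div_eq_inv_sqrt_one_sub_sq_sub_arsinh.eventuallyEq_of_mem (isOpen_Ioo.mem_nhds hh))
end

section
/- For all h ∈ (0,1), the inequality (3 − 2h²)/(2√(1−h²)) ≥ √2 holds, and consequently (3 − 2h²)·sinh(1/√(1−h²)) − 2√(1−h²)·cosh(1/√(1−h²)) > 0. -/
/-!
With `s = √(1 - h²) ∈ (0, 1)` we have `3 - 2h² = 1 + 2s² ≥ 2√2 s` by AM-GM, which is the first
claim. For the second, `x = 1/s ≥ 1` gives `sinh x > x ≥ 1`, so `cosh² x = 1 + sinh² x < 2 sinh² x`,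
i.e. `coth x < √2`; hence `(1 + 2s²) sinh x ≥ 2√2 s sinh x > 2s cosh x`.
-/

open Real

lemma two_mul_sqrt_two_mul_le (s : ℝ) : 2 * √2 * s ≤ 1 + 2 * s ^ 2 := by
  nlinarith [sq_nonneg (√2 * s - 1), sq_sqrt (zero_le_two : (0 : ℝ) ≤ 2)]

lemma cosh_lt_sqrt_two_mul_sinh_of_one_lt_sinh {x : ℝ} (hx : 1 < sinh x) :
    cosh x < √2 * sinh x := by
  have hsq : cosh x ^ 2 < (√2 * sinh x) ^ 2 := by
    rw [cosh_sq, mul_pow, sq_sqrt zero_le_two]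
    nlinarith
  exact lt_of_pow_lt_pow_left₀ 2 (by positivity) hsq

lemma cosh_lt_sqrt_two_mul_sinh {x : ℝ} (hx : 1 ≤ x) : cosh x < √2 * sinh x :=
  cosh_lt_sqrt_two_mul_sinh_of_one_lt_sinh (hx.trans_lt (self_lt_sinh_iff.2 (by linarith)))

lemma two_mul_cosh_inv_lt {s : ℝ} (hs₀ : 0 < s) (hs₁ : s ≤ 1) :
    2 * s * cosh s⁻¹ < (1 + 2 * s ^ 2) * sinh s⁻¹ := by
  have hsinh : 0 < sinh s⁻¹ := sinh_pos_iff.2 (inv_pos.2 hs₀)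
  calc 2 * s * cosh s⁻¹ < 2 * s * (√2 * sinh s⁻¹) := by
        gcongr
        exact cosh_lt_sqrt_two_mul_sinh (one_le_inv₀ hs₀ |>.2 hs₁)
    _ = 2 * √2 * s * sinh s⁻¹ := by ring
    _ ≤ (1 + 2 * s ^ 2) * sinh s⁻¹ := by gcongr; exact two_mul_sqrt_two_mul_le s

/-- For `h ∈ (0,1)` we have `(3 − 2h²)/(2√(1−h²)) ≥ √2`, and consequently
`(3 − 2h²)·sinh(1/√(1−h²)) − 2√(1−h²)·cosh(1/√(1−h²)) > 0`. -/
theorem stmt_3 (h : ℝ) (hh : h ∈ Set.Ioo (0 : ℝ) 1) :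
    Real.sqrt 2 ≤ (3 - 2 * h ^ 2) / (2 * Real.sqrt (1 - h ^ 2)) ∧
    0 < (3 - 2 * h ^ 2) * Real.sinh (1 / Real.sqrt (1 - h ^ 2)) -
        2 * Real.sqrt (1 - h ^ 2) * Real.cosh (1 / Real.sqrt (1 - h ^ 2)) := by
  obtain ⟨h₀, h₁⟩ := hh
  set s := √(1 - h ^ 2)
  have hs₀ : 0 < s := sqrt_pos.2 (by nlinarith)
  have hs₁ : s ≤ 1 := sqrt_le_one.2 (by nlinarith)
  have hnum : 3 - 2 * h ^ 2 = 1 + 2 * s ^ 2 := by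
    rw [sq_sqrt (by nlinarith)]
    ring
  rw [hnum, one_div]
  constructor
  · rw [le_div_iff₀ (by positivity)]
    linarith [two_mul_sqrt_two_mul_le s]
  · linarith [two_mul_cosh_inv_lt hs₀ hs₁]
end

section
/- For h ∈ (0,1), let r̂(h) = r̃·cosh(z̃/r̃) with r̃ = h√(1−h²) and z̃ = h − r̃·arcsinh(√(1−h²)/h). Then r̂ is strictly increasing on (0,1). -/
/-!
Writing `s = √(1 - h²)`, the identity `cosh (a - arsinh b) = cosh a · √(1 + b²) - sinh a · b`
with `a = 1/s`, `b = s/h` and `√(1 + s²/h²) = 1/h` gives `r̂(h) = k(1/s)`, where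
`k(u) = cosh u / u - sinh u / u²`. Since `1/s` increases with `h`, it suffices that `k` increases
on `(0, ∞)`, i.e. that `k'(u) = ((u² + 2) sinh u - 2u cosh u) / u³ > 0`; the numerator vanishes
at `0` and has derivative `u² cosh u > 0`.
-/

open Real Set

lemma two_mul_mul_cosh_lt_mul_sinh {u : ℝ} (hu : 0 < u) :
    2 * u * cosh u < (u ^ 2 + 2) * sinh u := by
  have hmono : StrictMonoOn (fun u : ℝ => (u ^ 2 + 2) * sinh u - 2 * u * cosh u) (Ici 0) := by
    refine strictMonoOn_of_hasDerivWithinAt_pos (convex_Ici 0) (by fun_prop)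
      (f' := fun x => x ^ 2 * cosh x) (fun x _ => ?_) fun x hx => ?_
    · refine HasDerivAt.hasDerivWithinAt ((((hasDerivAt_pow 2 x).add_const 2).mul
        (hasDerivAt_sinh x)).sub (((hasDerivAt_id' x).const_mul 2).mul (hasDerivAt_cosh x))
        |>.congr_deriv ?_)
      push_cast
      ring
    · rw [interior_Ici] at hx
      exact mul_pos (pow_pos hx 2) (cosh_pos x)
  simpa using hmono self_mem_Ici hu.le hu

lemma strictMonoOn_cosh_div_sub_sinh_div_sq :
    StrictMonoOn (fun u : ℝ => cosh u / u - sinh u / u ^ 2) (Ioi 0) := by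
  refine strictMonoOn_of_hasDerivWithinAt_pos (convex_Ioi 0) ?_
    (f' := fun u => ((u ^ 2 + 2) * sinh u - 2 * u * cosh u) / u ^ 3) (fun u hu => ?_)
    fun u hu => ?_
  · exact continuousOn_of_forall_continuousAt fun u (hu : 0 < u) => by
      have := hu.ne'
      fun_prop (disch := positivity)
  · rw [interior_Ioi] at hu
    have hu0 : u ≠ 0 := hu.ne'
    refine HasDerivAt.hasDerivWithinAt (((hasDerivAt_cosh u).div (hasDerivAt_id' u) hu0).sub
      ((hasDerivAt_sinh u).div (hasDerivAt_pow 2 u) (pow_ne_zero 2 hu0)) |>.congr_deriv ?_)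
    field_simp
    ring
  · rw [interior_Ioi] at hu
    exact div_pos (sub_pos.2 (two_mul_mul_cosh_lt_mul_sinh hu)) (pow_pos hu 3)

lemma one_sub_sq_pos {h : ℝ} (hh : h ∈ Ioo (0 : ℝ) 1) : 0 < 1 - h ^ 2 := by
  nlinarith [hh.1, hh.2]

lemma strictMonoOn_inv_sqrt_one_sub_sq :
    StrictMonoOn (fun h : ℝ => (√(1 - h ^ 2))⁻¹) (Ioo 0 1) := by
  intro a ha b hb hab
  have hb2 := one_sub_sq_pos hb
  exact inv_strictAntiOn (sqrt_pos.2 hb2) (sqrt_pos.2 (one_sub_sq_pos ha))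
    (sqrt_lt_sqrt hb2.le (by nlinarith [ha.1]))

lemma mul_sqrt_one_sub_sq_mul_cosh_eq {h : ℝ} (hh : h ∈ Ioo (0 : ℝ) 1) :
    h * √(1 - h ^ 2) *
        cosh ((h - h * √(1 - h ^ 2) * arsinh (√(1 - h ^ 2) / h)) / (h * √(1 - h ^ 2))) =
      cosh (√(1 - h ^ 2))⁻¹ / (√(1 - h ^ 2))⁻¹ -
        sinh (√(1 - h ^ 2))⁻¹ / (√(1 - h ^ 2))⁻¹ ^ 2 := by
  have h0 : h ≠ 0 := hh.1.ne'
  set s := √(1 - h ^ 2)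
  have hs0 : 0 < s := sqrt_pos.2 (one_sub_sq_pos hh)
  have hs2 : s ^ 2 = 1 - h ^ 2 := sq_sqrt (one_sub_sq_pos hh).le
  have harg : (h - h * s * arsinh (s / h)) / (h * s) = s⁻¹ - arsinh (s / h) := by
    field_simp
  have hcosh : √(1 + (s / h) ^ 2) = h⁻¹ := by
    rw [show 1 + (s / h) ^ 2 = h⁻¹ ^ 2 by rw [div_pow, hs2]; field_simp; ring,
      sqrt_sq (inv_nonneg.2 hh.1.le)]
  rw [harg, cosh_sub, sinh_arsinh, cosh_arsinh, hcosh]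
  field_simp

/-- The function `r̂(h) = r̃·cosh(z̃/r̃)`, with `r̃ = h√(1−h²)` and
`z̃ = h − r̃·arcsinh(√(1−h²)/h)`, is strictly increasing on `(0,1)`. -/
theorem stmt_4 :
    StrictMonoOn
      (fun h : ℝ =>
        h * Real.sqrt (1 - h ^ 2) *
          Real.cosh
            ((h - h * Real.sqrt (1 - h ^ 2) * Real.arsinh (Real.sqrt (1 - h ^ 2) / h)) /
              (h * Real.sqrt (1 - h ^ 2))))
      (Set.Ioo 0 1) := by
  have hmaps : MapsTo (fun h : ℝ => (√(1 - h ^ 2))⁻¹) (Ioo 0 1) (Ioi 0) := fun h hh =>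
    inv_pos.2 (sqrt_pos.2 (one_sub_sq_pos hh))
  exact (strictMonoOn_cosh_div_sub_sinh_div_sq.comp strictMonoOn_inv_sqrt_one_sub_sq hmaps).congr
    fun h hh => (mul_sqrt_one_sub_sq_mul_cosh_eq hh).symm
end

section
/- The function φ_even(x) = 1 − sin x · log((1 + sin x)/cos x) satisfies φ_even(0) = 1, is strictly decreasing on (0, π/2), tends to −∞ as x → π/2⁻, and therefore has a unique root x_crit in (0, π/2); moreover x_crit > π/4. -/
/-!
Since `(1 + sin x) / cos x = tan (x / 2 + π / 4)`, its logarithm, the inverse Gudermannian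
function, is strictly increasing on `(-π/2, π/2)`, vanishes at `0` and tends to `+∞` at `π/2`.
Hence `φ_even = 1 - sin · gd⁻¹` is strictly decreasing on `(0, π/2)` with limit `-∞`, and has a
unique root there by the intermediate value theorem. The root lies beyond `π/4` because
`φ_even (π/4) = 1 - log (√2 + 1) / √2 > 0`, as `√2 + 1 < e`.
-/

open Real Set Filter Topology

theorem StrictMonoOn.mul {α M₀ : Type*} [Preorder α] [MulZeroClass M₀] [PartialOrder M₀]
    [PosMulStrictMono M₀] [MulPosStrictMono M₀] {f g : α → M₀} {s : Set α}
    (hf : StrictMonoOn f s) (hg : StrictMonoOn g s) (hf₀ : ∀ x ∈ s, 0 ≤ f x)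
    (hg₀ : ∀ x ∈ s, 0 ≤ g x) : StrictMonoOn (f * g) s :=
  fun _ ha _ hb h ↦ mul_lt_mul'' (hf ha hb h) (hg ha hb h) (hf₀ _ ha) (hg₀ _ ha)

theorem exists_mem_Ioo_eq_zero_of_tendsto_atBot {f : ℝ → ℝ} {a b : ℝ} (hab : a < b)
    (hf : ContinuousOn f (Ico a b)) (ha : 0 < f a) (hb : Tendsto f (𝓝[<] b) atBot) :
    ∃ x ∈ Ioo a b, f x = 0 := by
  obtain ⟨c, hc_neg, hc⟩ :=
    ((hb.eventually (eventually_lt_atBot 0)).and (Ioo_mem_nhdsLT hab)).exists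
  obtain ⟨x, hx, hx0⟩ :=
    intermediate_value_Ioo' hc.1.le (hf.mono (Icc_subset_Ico_right hc.2)) ⟨hc_neg, ha⟩
  exact ⟨x, Ioo_subset_Ioo_right hc.2.le hx, hx0⟩

-- Valid for every `x`: where `cos x = 0`, both sides are `0` by the convention `y / 0 = 0`.
theorem tan_half_add_pi_div_four (x : ℝ) : tan (x / 2 + π / 4) = (1 + sin x) / cos x := by
  have hx : x = 2 * (x / 2) := by ring
  set t := x / 2
  rw [hx, sin_two_mul, cos_two_mul, tan_eq_sin_div_cos, sin_add, cos_add, sin_pi_div_four,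
    cos_pi_div_four]
  have hnum : 1 + 2 * sin t * cos t = (sin t + cos t) ^ 2 := by
    nlinarith [sin_sq_add_cos_sq t]
  have hden : 2 * cos t ^ 2 - 1 = (cos t - sin t) * (cos t + sin t) := by
    nlinarith [sin_sq_add_cos_sq t]
  rw [hnum, hden]
  rcases eq_or_ne (sin t + cos t) 0 with h | h
  · simp [show cos t = -sin t by linarith]
  · rw [add_comm (cos t), sq, mul_div_mul_right _ _ h]
    field_simp

theorem one_add_sin_div_cos_pos {x : ℝ} (hx : x ∈ Ioo (-(π / 2)) (π / 2)) :
    0 < (1 + sin x) / cos x := by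
  have hc : 0 < cos x := cos_pos_of_mem_Ioo hx
  have hs : 0 < 1 + sin x := by nlinarith [sin_sq_add_cos_sq x, sin_le_one x, neg_one_le_sin x]
  positivity

theorem strictMonoOn_one_add_sin_div_cos :
    StrictMonoOn (fun x ↦ (1 + sin x) / cos x) (Ioo (-(π / 2)) (π / 2)) := by
  intro x hx y hy hxy
  simp only [← tan_half_add_pi_div_four]
  refine strictMonoOn_tan ?_ ?_ (by linarith) <;> constructor <;>
    linarith [hx.1, hx.2, hy.1, hy.2, pi_pos]

noncomputable def invGudermannian (x : ℝ) : ℝ := log ((1 + sin x) / cos x)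

@[simp]
theorem invGudermannian_zero : invGudermannian 0 = 0 := by
  simp [invGudermannian]

theorem strictMonoOn_invGudermannian :
    StrictMonoOn invGudermannian (Ioo (-(π / 2)) (π / 2)) := fun _ hx _ hy hxy ↦
  log_lt_log (one_add_sin_div_cos_pos hx) (strictMonoOn_one_add_sin_div_cos hx hy hxy)

theorem invGudermannian_pos {x : ℝ} (hx : x ∈ Ioo 0 (π / 2)) : 0 < invGudermannian x := by
  have h0 : (0 : ℝ) ∈ Ioo (-(π / 2)) (π / 2) := ⟨by linarith [pi_pos], by positivity⟩
  simpa using strictMonoOn_invGudermannian h0 ⟨by linarith [hx.1, pi_pos], hx.2⟩ hx.1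

theorem tendsto_invGudermannian_atTop : Tendsto invGudermannian (𝓝[<] (π / 2)) atTop := by
  have h : Tendsto (fun x : ℝ ↦ x / 2 + π / 4) (𝓝[<] (π / 2)) (𝓝[<] (π / 2)) := by
    apply tendsto_nhdsWithin_of_tendsto_nhds_of_eventually_within
    · exact ((by fun_prop : Continuous fun x : ℝ ↦ x / 2 + π / 4).tendsto' _ _ (by ring)).mono_left
        nhdsWithin_le_nhds
    · filter_upwards [self_mem_nhdsWithin] with x (hx : x < π / 2)
      show x / 2 + π / 4 < π / 2
      linarith
  have hlog : invGudermannian = fun x ↦ log (tan (x / 2 + π / 4)) := by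
    ext x
    rw [invGudermannian, tan_half_add_pi_div_four]
  rw [hlog]
  exact tendsto_log_atTop.comp (tendsto_tan_pi_div_two.comp h)

theorem continuousOn_invGudermannian :
    ContinuousOn invGudermannian (Ioo (-(π / 2)) (π / 2)) := by
  intro x hx
  have hc : cos x ≠ 0 := (cos_pos_of_mem_Ioo hx).ne'
  have hr : (1 + sin x) / cos x ≠ 0 := (one_add_sin_div_cos_pos hx).ne'
  unfold invGudermannian
  fun_prop (disch := assumption)

theorem invGudermannian_pi_div_four : invGudermannian (π / 4) = log (√2 + 1) := by
  rw [invGudermannian, sin_pi_div_four, cos_pi_div_four]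
  congr 1
  field_simp
  rw [mul_add, mul_self_sqrt zero_le_two, mul_one]

theorem log_sqrt_two_add_one_lt_one : log (√2 + 1) < 1 := by
  rw [log_lt_iff_lt_exp (by positivity)]
  nlinarith [exp_one_gt_d9, sq_sqrt (show (0 : ℝ) ≤ 2 by norm_num), sqrt_nonneg 2]

noncomputable def phiEven (x : ℝ) : ℝ := 1 - sin x * invGudermannian x

theorem strictAntiOn_phiEven : StrictAntiOn phiEven (Ioo 0 (π / 2)) := by
  have hsin : StrictMonoOn sin (Ioo 0 (π / 2)) :=
    strictMonoOn_sin.mono <|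
      Ioo_subset_Icc_self.trans <| Icc_subset_Icc (by linarith [pi_pos]) le_rfl
  have hprod : StrictMonoOn (sin * invGudermannian) (Ioo 0 (π / 2)) :=
    hsin.mul (strictMonoOn_invGudermannian.mono (Ioo_subset_Ioo_left (by linarith [pi_pos])))
      (fun x hx ↦ (sin_pos_of_mem_Ioo ⟨hx.1, by linarith [hx.2, pi_pos]⟩).le)
      (fun x hx ↦ (invGudermannian_pos hx).le)
  intro x hx y hy hxy
  have := hprod hx hy hxy
  simp only [Pi.mul_apply] at this
  simp only [phiEven]
  linarith

theorem tendsto_phiEven_atBot : Tendsto phiEven (𝓝[<] (π / 2)) atBot := by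
  have hsin : Tendsto sin (𝓝[<] (π / 2)) (𝓝 1) := by
    simpa using continuous_sin.continuousWithinAt.tendsto (x := π / 2) (s := Iio (π / 2))
  exact tendsto_atBot_add_const_left _ 1
    (tendsto_neg_atBot_iff.mpr (hsin.pos_mul_atTop one_pos tendsto_invGudermannian_atTop))

theorem continuousOn_phiEven : ContinuousOn phiEven (Ioo (-(π / 2)) (π / 2)) :=
  continuousOn_const.sub (continuous_sin.continuousOn.mul continuousOn_invGudermannian)

theorem phiEven_pi_div_four_pos : 0 < phiEven (π / 4) := by
  have hpos := invGudermannian_pos (x := π / 4) ⟨by positivity, by linarith [pi_pos]⟩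
  have hlt := invGudermannian_pi_div_four ▸ log_sqrt_two_add_one_lt_one
  have hsin : sin (π / 4) < 1 := by
    rw [sin_pi_div_four]
    nlinarith [sq_sqrt (show (0 : ℝ) ≤ 2 by norm_num), sqrt_nonneg 2]
  unfold phiEven
  nlinarith

/-- `φ_even(x) = 1 − sin x·log((1+sin x)/cos x)` satisfies `φ_even(0) = 1`, is strictly
decreasing on `(0, π/2)`, tends to `−∞` as `x → π/2⁻`, has a unique root `x_crit` in
`(0, π/2)`, and this root is greater than `π/4`. -/
theorem stmt_9 :
    (1 - Real.sin 0 * Real.log ((1 + Real.sin 0) / Real.cos 0) = 1) ∧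
    StrictAntiOn (fun x : ℝ => 1 - Real.sin x * Real.log ((1 + Real.sin x) / Real.cos x))
      (Set.Ioo 0 (Real.pi / 2)) ∧
    Filter.Tendsto (fun x : ℝ => 1 - Real.sin x * Real.log ((1 + Real.sin x) / Real.cos x))
      (nhdsWithin (Real.pi / 2) (Set.Iio (Real.pi / 2))) Filter.atBot ∧
    (∃! x : ℝ, x ∈ Set.Ioo 0 (Real.pi / 2) ∧
      1 - Real.sin x * Real.log ((1 + Real.sin x) / Real.cos x) = 0) ∧
    (∀ x ∈ Set.Ioo 0 (Real.pi / 2),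
      1 - Real.sin x * Real.log ((1 + Real.sin x) / Real.cos x) = 0 → Real.pi / 4 < x) := by
  have hπ4 : π / 4 ∈ Ioo 0 (π / 2) := ⟨by positivity, by linarith [pi_pos]⟩
  have hroot_gt : ∀ x ∈ Ioo 0 (π / 2), phiEven x = 0 → π / 4 < x := fun x hx h0 ↦
    (strictAntiOn_phiEven.lt_iff_gt hx hπ4).mp (h0 ▸ phiEven_pi_div_four_pos)
  obtain ⟨x, hx, hx0⟩ : ∃ x ∈ Ioo (π / 4) (π / 2), phiEven x = 0 :=
    exists_mem_Ioo_eq_zero_of_tendsto_atBot hπ4.2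
      (continuousOn_phiEven.mono (Ico_subset_Ioo_left (by linarith [pi_pos])))
      phiEven_pi_div_four_pos tendsto_phiEven_atBot
  have hx' : x ∈ Ioo 0 (π / 2) := ⟨hπ4.1.trans hx.1, hx.2⟩
  refine ⟨by simp, strictAntiOn_phiEven, tendsto_phiEven_atBot, ⟨x, ⟨hx', hx0⟩, ?_⟩, hroot_gt⟩
  rintro y ⟨hy, hy0⟩
  exact strictAntiOn_phiEven.injOn hy hx' (hy0.trans hx0.symm)
end

section
/- Suppose f solves f'' − tan(x)·f' + 2f = 0 on [0, x_c] with f(0) = 0 and the Robin condition −cot(x_c)·f'(x_c) + f(x_c) = 0, where x_c ∈ (0, π/2) and x_c ≠ π/4. If additionally sin x_c · log((1+sin x_c)/cos x_c) = 1 (i.e. φ_even(x_c) = 0), then f ≡ 0. -/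
/-!
Multiplying the equation by `cos x` puts it in Sturm–Liouville form `(cos x · f')' + 2 cos x · f = 0`,
of which `sin` is a solution. Hence the Wronskian of `f` and `sin`, weighted by `cos`, is constant, and
it vanishes at `0` because `f 0 = 0 = sin 0`. So `f' sin = f cos`, i.e. `f / sin` is constant on
`(0, x_c]`. At `x_c` this relation together with the Robin condition `cos x_c · f' = sin x_c · f`
gives `f x_c · (sin² x_c − cos² x_c) = 0`, and `sin x_c ≠ cos x_c` because `x_c ≠ π/4`.
-/

open Set Real Filter Topology

lemma eq_of_continuousOn_of_hasDerivAt_zero {g : ℝ → ℝ} {a b : ℝ} (hab : a ≤ b)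
    (hc : ContinuousOn g (Icc a b)) (hd : ∀ x ∈ Ioo a b, HasDerivAt g 0 x) : g a = g b := by
  rcases hab.eq_or_lt with rfl | hab
  · rfl
  obtain ⟨c, _, hslope⟩ := exists_hasDerivAt_eq_slope g (fun _ => 0) hab hc hd
  rw [eq_comm, div_eq_zero_iff, sub_eq_zero, sub_eq_zero] at hslope
  exact hslope.resolve_right hab.ne' |>.symm

lemma DifferentiableOn.hasDerivAt_derivWithin_Icc {f : ℝ → ℝ} {a b x : ℝ}
    (hf : DifferentiableOn ℝ f (Icc a b)) (hx : x ∈ Ioo a b) :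
    HasDerivAt f (derivWithin f (Icc a b) x) x := by
  have hmem : Icc a b ∈ 𝓝 x := Icc_mem_nhds hx.1 hx.2
  rw [derivWithin_of_mem_nhds hmem]
  exact (hf.differentiableAt hmem).hasDerivAt

lemma ContDiffOn.hasDerivAt_derivWithin_Icc_deriv_deriv {f : ℝ → ℝ} {a b x : ℝ}
    (hf : ContDiffOn ℝ 2 f (Icc a b)) (hx : x ∈ Ioo a b) :
    HasDerivAt (derivWithin f (Icc a b)) (deriv (deriv f) x) x := by
  have hmem : Icc a b ∈ 𝓝 x := Icc_mem_nhds hx.1 hx.2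
  have heq : derivWithin f (Icc a b) =ᶠ[𝓝 x] deriv f := by
    filter_upwards [Ioo_mem_nhds hx.1 hx.2] with y hy
    exact derivWithin_of_mem_nhds (Icc_mem_nhds hy.1 hy.2)
  rw [← heq.deriv_eq]
  have hf' : ContDiffOn ℝ 1 (derivWithin f (Icc a b)) (Icc a b) :=
    hf.derivWithin (uniqueDiffOn_Icc (hx.1.trans hx.2)) (by norm_num)
  exact ((hf'.differentiableOn (by norm_num)).differentiableAt hmem).hasDerivAt

lemma hasDerivAt_wronskian_sin_mul_cos {f f' : ℝ → ℝ} {x f'' : ℝ}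
    (hf : HasDerivAt f (f' x) x) (hf' : HasDerivAt f' f'' x) (hcos : cos x ≠ 0)
    (hode : f'' - tan x * f' x + 2 * f x = 0) :
    HasDerivAt (fun y => (f' y * sin y - f y * cos y) * cos y) 0 x := by
  refine (((hf'.mul (hasDerivAt_sin x)).sub (hf.mul (hasDerivAt_cos x))).mul
    (hasDerivAt_cos x)).congr_deriv ?_
  rw [tan_eq_sin_div_cos] at hode
  have hf'' : f'' = sin x / cos x * f' x - 2 * f x := by linarith
  simp only [Pi.mul_apply, Pi.sub_apply, hf'']
  field_simp
  ring

lemma deriv_mul_sin_eq_mul_cos {f : ℝ → ℝ} {b : ℝ} (hb : b < π / 2)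
    (hf : ContDiffOn ℝ 2 f (Icc 0 b))
    (hode : ∀ x ∈ Ioo 0 b, deriv (deriv f) x - tan x * deriv f x + 2 * f x = 0)
    (h0 : f 0 = 0) :
    ∀ x ∈ Icc 0 b, derivWithin f (Icc 0 b) x * sin x = f x * cos x := by
  intro x hx
  set f' := derivWithin f (Icc 0 b)
  have hcos : ∀ y ∈ Icc 0 b, cos y ≠ 0 := fun y hy =>
    (cos_pos_of_mem_Ioo ⟨by linarith [pi_pos, hy.1], by linarith [hy.2]⟩).ne'
  have hsub : Icc 0 x ⊆ Icc 0 b := Icc_subset_Icc_right hx.2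
  rcases hx.1.eq_or_lt with rfl | hx0
  · simp [h0]
  have hb0 : 0 < b := hx0.trans_le hx.2
  have hcont : ContinuousOn (fun y => (f' y * sin y - f y * cos y) * cos y) (Icc 0 x) := by
    have hf'c : ContinuousOn f' (Icc 0 x) :=
      (hf.continuousOn_derivWithin (uniqueDiffOn_Icc hb0) (by norm_num)).mono hsub
    have hfc : ContinuousOn f (Icc 0 x) := hf.continuousOn.mono hsub
    fun_prop
  have hconst := eq_of_continuousOn_of_hasDerivAt_zero hx.1 hcont fun y hy =>
    have hy' : y ∈ Ioo 0 b := ⟨hy.1, hy.2.trans_le hx.2⟩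
    hasDerivAt_wronskian_sin_mul_cos ((hf.differentiableOn (by norm_num)).hasDerivAt_derivWithin_Icc hy')
      (hf.hasDerivAt_derivWithin_Icc_deriv_deriv hy') (hcos y (Ioo_subset_Icc_self hy'))
      (by rw [show f' y = deriv f y from derivWithin_of_mem_nhds (Icc_mem_nhds hy'.1 hy'.2)]
          exact hode y hy')
  simp only [sin_zero, cos_zero, h0, mul_zero, zero_mul, sub_zero] at hconst
  rw [eq_comm, mul_eq_zero, sub_eq_zero] at hconst
  exact hconst.resolve_right (hcos x hx)

lemma div_sin_eq_of_deriv_mul_sin_eq_mul_cos {f f' : ℝ → ℝ} {a b : ℝ} (ha : 0 < a) (hab : a ≤ b)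
    (hb : b < π) (hc : ContinuousOn f (Icc a b)) (hd : ∀ x ∈ Ioo a b, HasDerivAt f (f' x) x)
    (hW : ∀ x ∈ Ioo a b, f' x * sin x = f x * cos x) : f a / sin a = f b / sin b := by
  have hsin : ∀ x ∈ Icc a b, sin x ≠ 0 := fun x hx =>
    (sin_pos_of_pos_of_lt_pi (ha.trans_le hx.1) (hx.2.trans_lt hb)).ne'
  refine eq_of_continuousOn_of_hasDerivAt_zero hab (hc.div continuousOn_sin hsin) fun x hx => ?_
  refine ((hd x hx).div (hasDerivAt_sin x) (hsin x (Ioo_subset_Icc_self hx))).congr_deriv ?_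
  rw [hW x hx, sub_self, zero_div]

lemma sin_ne_cos_of_ne_pi_div_four {x : ℝ} (hx : x ∈ Icc 0 (π / 2)) (hne : x ≠ π / 4) :
    sin x ≠ cos x := by
  intro h
  rw [← sin_pi_div_two_sub] at h
  have := injOn_sin ⟨by linarith [pi_pos, hx.1], by linarith [hx.2]⟩
    ⟨by linarith [pi_pos, hx.2], by linarith [hx.1]⟩ h
  exact hne (by linarith)

theorem stmt_10_general (xc : ℝ) (hxc : xc ∈ Set.Ioo 0 (Real.pi / 2)) (hne : xc ≠ Real.pi / 4)
    (f : ℝ → ℝ) (hreg : ContDiffOn ℝ 2 f (Set.Icc 0 xc))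
    (hode : ∀ x ∈ Set.Ioo 0 xc,
      deriv (deriv f) x - Real.tan x * deriv f x + 2 * f x = 0)
    (hdir : f 0 = 0)
    (hrob : -(Real.cos xc / Real.sin xc) * derivWithin f (Set.Icc 0 xc) xc + f xc = 0) :
    ∀ x ∈ Set.Icc 0 xc, f x = 0 := by
  obtain ⟨hxc0, hxc⟩ := hxc
  have hW := deriv_mul_sin_eq_mul_cos hxc hreg hode hdir
  have hsin : 0 < sin xc := sin_pos_of_pos_of_lt_pi hxc0 (by linarith [pi_pos])
  have hcos : 0 < cos xc := cos_pos_of_mem_Ioo ⟨by linarith [pi_pos], hxc⟩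
  have hfxc : f xc = 0 := by
    field_simp at hrob
    have key : f xc * ((sin xc - cos xc) * (sin xc + cos xc)) = 0 := by
      linear_combination sin xc * hrob + cos xc * hW xc ⟨hxc0.le, le_rfl⟩
    have hsc := sub_ne_zero.2 (sin_ne_cos_of_ne_pi_div_four ⟨hxc0.le, hxc.le⟩ hne)
    simpa [hsc, (add_pos hsin hcos).ne'] using key
  intro x ⟨hx0, hx⟩
  rcases hx0.eq_or_lt with rfl | hx0
  · exact hdir
  have hdiv := div_sin_eq_of_deriv_mul_sin_eq_mul_cos hx0 hx (by linarith [pi_pos])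
    (hreg.continuousOn.mono (Icc_subset_Icc_left hx0.le))
    (fun y hy => (hreg.differentiableOn (by norm_num)).hasDerivAt_derivWithin_Icc
      ⟨hx0.trans hy.1, hy.2⟩)
    (fun y hy => hW y ⟨(hx0.trans hy.1).le, hy.2.le⟩)
  rw [hfxc, zero_div, div_eq_zero_iff] at hdiv
  exact hdiv.resolve_right (sin_pos_of_pos_of_lt_pi hx0 (by linarith [pi_pos])).ne'

/-- If `f` solves `f'' − tan(x)·f' + 2f = 0` on `[0, x_c]` with `f(0) = 0` and the Robin
condition `−cot(x_c)·f'(x_c) + f(x_c) = 0`, where `x_c ∈ (0, π/2)`, `x_c ≠ π/4`, and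
`φ_even(x_c) = 0` (i.e. `sin x_c·log((1+sin x_c)/cos x_c) = 1`), then `f ≡ 0`. -/
theorem stmt_10 (xc : ℝ) (hxc : xc ∈ Set.Ioo 0 (Real.pi / 2)) (hne : xc ≠ Real.pi / 4)
    (hroot : Real.sin xc * Real.log ((1 + Real.sin xc) / Real.cos xc) = 1)
    (f : ℝ → ℝ) (hreg : ContDiffOn ℝ 2 f (Set.Icc 0 xc))
    (hode : ∀ x ∈ Set.Ioo 0 xc,
      deriv (deriv f) x - Real.tan x * deriv f x + 2 * f x = 0)
    (hdir : f 0 = 0)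
    (hrob : -(Real.cos xc / Real.sin xc) * derivWithin f (Set.Icc 0 xc) xc + f xc = 0) :
    ∀ x ∈ Set.Icc 0 xc, f x = 0 :=
  stmt_10_general xc hxc hne f hreg hode hdir hrob
end
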